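/- Let L > 0 and set λ = (2π/L)⁴. The operator h ↦ (d²/dx²)[sinh(h'')] is strongly monotone on mean-zero profiles: for any two four times continuously differentiable L-periodic mean-zero functions u, v : ℝ → ℝ, ∫₀ᴸ ( (d²/dx²)[sinh(u''(x))] − (d²/dx²)[sinh(v''(x))] ) (u(x) − v(x)) dx ≥ λ ∫₀ᴸ (u(x) − v(x))² dx. -/

import Mathlib

/-!
Write `w = u - v`. Integrating by parts twice moves the outer derivatives onto `w`, turning the
right-hand side into `∫ (sinh u'' - sinh v'') w''`, and since `sinh' = cosh ≥ 1` this is at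
least `∫ (w'')²`. Wirtinger's inequality `(2π/L)² ∫ g² ≤ ∫ (g')²` for mean-zero periodic `g`
(by Parseval: the zero mode vanishes and differentiation multiplies the `n`-th Fourier
coefficient by `2πin/L`) applied to `w` and to `w'`, which is mean-zero by periodicity, gives
`∫ (w'')² ≥ (2π/L)⁴ ∫ w²`.
-/
open MeasureTheory Real intervalIntegral Set

section Fourier
open Complex
variable {a b : ℝ}

lemma fourierCoeffOn_zero_eq (hab : a < b) (f : ℝ → ℂ) :
    fourierCoeffOn hab f 0 = (1 / (b - a)) • ∫ x in a..b, f x := by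
  simp [fourierCoeffOn_eq_integral]

lemma fourierCoeffOn_deriv_of_eq (hab : a < b) {f f' : ℝ → ℂ} {n : ℤ} (hn : n ≠ 0)
    (hf : ∀ x ∈ uIcc a b, HasDerivAt f (f' x) x) (hf' : IntervalIntegrable f' volume a b)
    (hfab : f b = f a) :
    fourierCoeffOn hab f' n = 2 * π * I * n / (b - a) * fourierCoeffOn hab f n := by
  have hba : (b : ℂ) - a ≠ 0 := by exact_mod_cast (sub_pos.2 hab).ne'
  rw [fourierCoeffOn_of_hasDerivAt hab hn hf hf', hfab, sub_self, mul_zero, zero_sub]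
  field_simp

lemma Continuous.memLp_two_restrict_Ioc {E : Type*} [NormedAddCommGroup E] {f : ℝ → E}
    (hf : Continuous f) :
    MemLp f 2 (volume.restrict (Ioc a b)) :=
  (memLp_two_iff_integrable_sq_norm hf.aestronglyMeasurable).2 (hf.norm.pow 2).integrableOn_Ioc

lemma sq_mul_norm_sq_fourierCoeffOn_le (hab : a < b) {f f' : ℝ → ℂ}
    (hf : ∀ x, HasDerivAt f (f' x) x) (hf' : Continuous f') (hfab : f b = f a)
    (hmean : ∫ x in a..b, f x = 0) (n : ℤ) :
    (2 * π / (b - a)) ^ 2 * ‖fourierCoeffOn hab f n‖ ^ 2 ≤ ‖fourierCoeffOn hab f' n‖ ^ 2 := by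
  rcases eq_or_ne n 0 with rfl | hn
  · rw [fourierCoeffOn_zero_eq, hmean]
    simp
  have hnorm : ‖2 * π * I * n / (b - a)‖ = 2 * π / (b - a) * |(n : ℝ)| := by
    rw [norm_div, ← ofReal_sub, norm_real, Real.norm_of_nonneg (sub_pos.2 hab).le]
    simp only [Complex.norm_mul, Complex.norm_ofNat, norm_real, norm_eq_abs, abs_of_pos pi_pos,
      norm_I, mul_one, norm_intCast]
    ring
  have hn1 : (1 : ℝ) ≤ |(n : ℝ)| ^ 2 := one_le_pow₀ (by exact_mod_cast Int.one_le_abs hn)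
  rw [fourierCoeffOn_deriv_of_eq hab hn (fun x _ ↦ hf x) (hf'.intervalIntegrable a b) hfab,
    norm_mul, hnorm, mul_pow, mul_pow, mul_assoc]
  gcongr
  exact le_mul_of_one_le_left (sq_nonneg _) hn1

theorem wirtinger_inequality_complex (hab : a < b) {f f' : ℝ → ℂ}
    (hf : ∀ x, HasDerivAt f (f' x) x) (hf' : Continuous f') (hfab : f b = f a)
    (hmean : ∫ x in a..b, f x = 0) :
    (2 * π / (b - a)) ^ 2 * ∫ x in a..b, ‖f x‖ ^ 2 ≤ ∫ x in a..b, ‖f' x‖ ^ 2 := by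
  have hf_cont : Continuous f := continuous_iff_continuousAt.2 fun x ↦ (hf x).continuousAt
  have parseval := hasSum_sq_fourierCoeffOn hab hf_cont.memLp_two_restrict_Ioc
  have parseval' := hasSum_sq_fourierCoeffOn hab hf'.memLp_two_restrict_Ioc
  have := hasSum_le (sq_mul_norm_sq_fourierCoeffOn_le hab hf hf' hfab hmean)
    (parseval.mul_left _) parseval'
  rw [smul_eq_mul, smul_eq_mul, ← mul_assoc, mul_comm _ (b - a)⁻¹, mul_assoc] at this
  exact le_of_mul_le_mul_left this (inv_pos.2 (sub_pos.2 hab))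

theorem wirtinger_inequality (hab : a < b) {f f' : ℝ → ℝ}
    (hf : ∀ x, HasDerivAt f (f' x) x) (hf' : Continuous f') (hfab : f b = f a)
    (hmean : ∫ x in a..b, f x = 0) :
    (2 * π / (b - a)) ^ 2 * ∫ x in a..b, f x ^ 2 ≤ ∫ x in a..b, f' x ^ 2 := by
  have := wirtinger_inequality_complex hab (f := fun x ↦ (f x : ℂ)) (f' := fun x ↦ (f' x : ℂ))
    (fun x ↦ (hf x).ofReal_comp) (continuous_ofReal.comp hf') (by rw [hfab])
    (by rw [integral_ofReal, hmean, ofReal_zero])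
  simpa only [norm_real, Real.norm_eq_abs, sq_abs] using this

end Fourier

theorem Function.Periodic.deriv {𝕜 F : Type*} [NontriviallyNormedField 𝕜] [NormedAddCommGroup F]
    [NormedSpace 𝕜 F] {f : 𝕜 → F} {c : 𝕜} (hf : Function.Periodic f c) :
    Function.Periodic (deriv f) c := fun x ↦ by
  rw [← deriv_comp_add_const, hf.funext]

theorem deriv_deriv_sub {𝕜 F : Type*} [NontriviallyNormedField 𝕜] [NormedAddCommGroup F]
    [NormedSpace 𝕜 F] {f g : 𝕜 → F} (hf : ContDiff 𝕜 2 f) (hg : ContDiff 𝕜 2 g) :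
    deriv (deriv (f - g)) = deriv (deriv f) - deriv (deriv g) := by
  funext x
  simpa [iteratedDeriv_eq_iterate] using
    iteratedDeriv_sub (n := 2) (x := x) hf.contDiffAt hg.contDiffAt

section Periodic
variable {L : ℝ} {f g : ℝ → ℝ}

theorem integral_deriv_mul_eq_neg_of_periodic (hf : ContDiff ℝ 1 f) (hg : ContDiff ℝ 1 g)
    (hfp : Function.Periodic f L) (hgp : Function.Periodic g L) :
    ∫ x in 0..L, deriv f x * g x = -∫ x in 0..L, f x * deriv g x := by
  have hfg := integral_mul_deriv_eq_deriv_mul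
    (fun x _ ↦ (hf.differentiable one_ne_zero x).hasDerivAt)
    (fun x _ ↦ (hg.differentiable one_ne_zero x).hasDerivAt)
    ((hf.continuous_deriv le_rfl).intervalIntegrable 0 L)
    ((hg.continuous_deriv le_rfl).intervalIntegrable 0 L)
  have hfL : f L = f 0 := by simpa using hfp 0
  have hgL : g L = g 0 := by simpa using hgp 0
  rw [hfL, hgL, sub_self, zero_sub] at hfg
  rw [hfg, neg_neg]

theorem integral_deriv_deriv_mul_of_periodic (hf : ContDiff ℝ 2 f) (hg : ContDiff ℝ 2 g)
    (hfp : Function.Periodic f L) (hgp : Function.Periodic g L) :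
    ∫ x in 0..L, deriv (deriv f) x * g x = ∫ x in 0..L, f x * deriv (deriv g) x := by
  rw [integral_deriv_mul_eq_neg_of_periodic hf.deriv' (hg.of_le one_le_two) hfp.deriv hgp,
    integral_deriv_mul_eq_neg_of_periodic (hf.of_le one_le_two) hg.deriv' hfp hgp.deriv, neg_neg]

theorem wirtinger_inequality_deriv_deriv (hL : 0 < L) (hf : ContDiff ℝ 2 f)
    (hfp : Function.Periodic f L) (hmean : ∫ x in 0..L, f x = 0) :
    (2 * π / L) ^ 4 * ∫ x in 0..L, f x ^ 2 ≤ ∫ x in 0..L, deriv (deriv f) x ^ 2 := by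
  have hf' : ContDiff ℝ 1 (deriv f) := hf.deriv'
  have hfL : f L = f 0 := by simpa using hfp 0
  have hf'L : deriv f L = deriv f 0 := by simpa using hfp.deriv 0
  have hmean' : ∫ x in 0..L, deriv f x = 0 := by
    rw [integral_deriv_eq_sub (fun x _ ↦ hf.differentiable two_ne_zero x)
      (hf'.continuous.intervalIntegrable 0 L), hfL, sub_self]
  have h1 := wirtinger_inequality hL (fun x ↦ (hf.differentiable two_ne_zero x).hasDerivAt)
    hf'.continuous hfL hmean
  have h2 := wirtinger_inequality hL (fun x ↦ (hf'.differentiable one_ne_zero x).hasDerivAt)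
    (hf'.continuous_deriv le_rfl) hf'L hmean'
  rw [sub_zero] at h1 h2
  calc (2 * π / L) ^ 4 * ∫ x in 0..L, f x ^ 2
      = (2 * π / L) ^ 2 * ((2 * π / L) ^ 2 * ∫ x in 0..L, f x ^ 2) := by ring
    _ ≤ (2 * π / L) ^ 2 * ∫ x in 0..L, deriv f x ^ 2 := by gcongr
    _ ≤ ∫ x in 0..L, deriv (deriv f) x ^ 2 := h2

end Periodic

theorem sq_sub_le_sinh_sub_mul (a b : ℝ) : (a - b) ^ 2 ≤ (sinh a - sinh b) * (a - b) := by
  have hmono : 0 ≤ ((sinh a - a) - (sinh b - b)) * (a - b) := by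
    rcases le_total b a with h | h
    · exact mul_nonneg (sub_nonneg.2 (sinh_sub_id_strictMono.monotone h)) (sub_nonneg.2 h)
    · exact mul_nonneg_of_nonpos_of_nonpos (sub_nonpos.2 (sinh_sub_id_strictMono.monotone h))
        (sub_nonpos.2 h)
  linarith

/-- strong monotonicity of h ↦ (sinh(h''))'' on C⁴ L-periodic
mean-zero profiles, with constant λ = (2π/L)⁴. -/
theorem operator_strongly_monotone
    (L : ℝ) (hL : 0 < L)
    (u v : ℝ → ℝ)
    (hu : ContDiff ℝ 4 u) (hup : Function.Periodic u L)
    (hum : ∫ x in (0:ℝ)..L, u x = 0)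
    (hv : ContDiff ℝ 4 v) (hvp : Function.Periodic v L)
    (hvm : ∫ x in (0:ℝ)..L, v x = 0) :
    (2 * Real.pi / L) ^ 4 * (∫ x in (0:ℝ)..L, (u x - v x) ^ 2)
      ≤ ∫ x in (0:ℝ)..L,
          (deriv (deriv (fun y => Real.sinh (deriv (deriv u) y))) x
            - deriv (deriv (fun y => Real.sinh (deriv (deriv v) y))) x)
          * (u x - v x) := by
  set Su := fun y ↦ sinh (deriv (deriv u) y)
  set Sv := fun y ↦ sinh (deriv (deriv v) y)
  have hu'' : ContDiff ℝ 2 (deriv (deriv u)) := hu.deriv'.deriv'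
  have hv'' : ContDiff ℝ 2 (deriv (deriv v)) := hv.deriv'.deriv'
  have hSu : ContDiff ℝ 2 Su := contDiff_sinh.comp hu''
  have hSv : ContDiff ℝ 2 Sv := contDiff_sinh.comp hv''
  have hSp : Function.Periodic (Su - Sv) L := fun x ↦ by
    simp only [Su, Sv, Pi.sub_apply, hup.deriv.deriv x, hvp.deriv.deriv x]
  have hmean : ∫ x in 0..L, (u - v) x = 0 := by
    simp only [Pi.sub_apply]
    rw [integral_sub (hu.continuous.intervalIntegrable 0 L) (hv.continuous.intervalIntegrable 0 L),
      hum, hvm, sub_zero]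
  calc (2 * π / L) ^ 4 * ∫ x in 0..L, (u x - v x) ^ 2
      ≤ ∫ x in 0..L, deriv (deriv (u - v)) x ^ 2 :=
        wirtinger_inequality_deriv_deriv hL ((hu.sub hv).of_le (by norm_num)) (hup.sub hvp) hmean
    _ ≤ ∫ x in 0..L, (Su - Sv) x * deriv (deriv (u - v)) x := by
        rw [deriv_deriv_sub (hu.of_le (by norm_num)) (hv.of_le (by norm_num))]
        refine integral_mono_on hL.le ?_ ?_ fun x _ ↦ sq_sub_le_sinh_sub_mul _ _
        · exact ((hu''.continuous.sub hv''.continuous).pow 2).intervalIntegrable 0 L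
        · exact ((hSu.sub hSv).continuous.mul
            (hu''.continuous.sub hv''.continuous)).intervalIntegrable 0 L
    _ = ∫ x in 0..L, deriv (deriv (Su - Sv)) x * (u - v) x :=
        (integral_deriv_deriv_mul_of_periodic (hSu.sub hSv) ((hu.sub hv).of_le (by norm_num))
          hSp (hup.sub hvp)).symm
    _ = _ := by rw [deriv_deriv_sub hSu hSv]; rfl
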